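/- Let H, K be complex inner product spaces with dim H ≥ 2 and A : H → K a nonzero additive map with dense image preserving orthogonality. Then A preserves orthogonality in both directions: ⟨x|y⟩ = 0 if and only if ⟨A x|A y⟩ = 0. -/

import Mathlib

/-!
Write `ω u v = ⟪A u, A v⟫`. If `x ⊥ z` are unit vectors and `conj l * m = conj n * k`, then
`l • x + n • z ⊥ m • x - k • z`, which gives `ω (l • x) (m • x) = ω (n • z) (k • z)`; the dimension
bound provides `z`. Projecting onto `ℂ ∙ x`, this yields `ω u v = G_x ⟪u, v⟫` for `u ∈ ℂ ∙ x`, where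
`G_x w = ω x (w • x)`. Evaluating `ω x (l • y)` both ways shows `G_x = G_y` when `⟪x, y⟫ ≠ 0`, and
orthogonal `x, y` are linked through the normalisation of `x + y`, so `ω u v = G ⟪u, v⟫` globally.
Then `‖A u‖² = Re G (‖u‖²)` bounds `A` on the unit ball, so `A` is continuous, hence `ℝ`-linear,
and so is `G`. Density of the range of `A ≠ 0` makes the range of `G` dense, and a real-linear
endomorphism of `ℂ` with dense range is injective.
-/

open scoped InnerProductSpace ComplexConjugate

theorem exists_norm_eq_one_inner_eq_zero {H : Type*} [NormedAddCommGroup H]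
    [InnerProductSpace ℂ H] (hdim : 2 ≤ Module.rank ℂ H) (x : H) :
    ∃ z : H, ‖z‖ = 1 ∧ ⟪x, z⟫_ℂ = 0 := by
  have hspan : (ℂ ∙ x) ≠ ⊤ := fun h => by
    have : Module.rank ℂ H ≤ 1 := by
      rw [← rank_top ℂ H, ← h]
      simpa using rank_span_le (R := ℂ) ({x} : Set H)
    exact absurd (hdim.trans this) (by norm_num)
  obtain ⟨w, hw, hw0⟩ :=
    Submodule.exists_mem_ne_zero_of_ne_bot (mt Submodule.orthogonal_eq_bot_iff.mp hspan)
  refine ⟨(‖w‖⁻¹ : ℂ) • w, norm_smul_inv_norm hw0, ?_⟩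
  rw [inner_smul_right, Submodule.mem_orthogonal_singleton_iff_inner_right.mp hw, mul_zero]

theorem LinearMap.injective_of_denseRange {𝕜 E : Type*} [NontriviallyNormedField 𝕜]
    [CompleteSpace 𝕜] [NormedAddCommGroup E] [NormedSpace 𝕜 E] [FiniteDimensional 𝕜 E]
    {f : E →ₗ[𝕜] E} (hf : DenseRange f) : Function.Injective f := by
  refine LinearMap.injective_iff_surjective.mpr fun y => ?_
  have hclosed := (LinearMap.range f).closed_of_finiteDimensional
  rw [LinearMap.coe_range] at hclosed
  exact (hclosed.closure_eq ▸ hf.closure_eq ▸ Set.mem_univ y : y ∈ Set.range f)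

section

variable {H K : Type*} [NormedAddCommGroup H] [InnerProductSpace ℂ H]
  [NormedAddCommGroup K] [InnerProductSpace ℂ K]

def PreservesOrthogonality (f : H → K) : Prop :=
  ∀ x y : H, ⟪x, y⟫_ℂ = 0 → ⟪f x, f y⟫_ℂ = 0

namespace PreservesOrthogonality

variable {A : H →+ K}

theorem inner_map_eq_of_inner_eq (hA : PreservesOrthogonality A) {u₁ v₁ u₂ v₂ : H}
    (h₁₂ : ⟪u₁, v₂⟫_ℂ = 0) (h₂₁ : ⟪u₂, v₁⟫_ℂ = 0) (h : ⟪u₁, v₁⟫_ℂ = ⟪u₂, v₂⟫_ℂ) :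
    ⟪A u₁, A v₁⟫_ℂ = ⟪A u₂, A v₂⟫_ℂ := by
  have hsum : ⟪u₁ + u₂, v₁ - v₂⟫_ℂ = 0 := by
    simp only [inner_add_left, inner_sub_right, h₁₂, h₂₁, h]; ring
  have hAsum := hA _ _ hsum
  simp only [map_add, map_sub, inner_add_left, inner_sub_right, hA _ _ h₁₂, hA _ _ h₂₁] at hAsum
  linear_combination hAsum

theorem inner_map_smul_smul (hA : PreservesOrthogonality A) (hdim : 2 ≤ Module.rank ℂ H)
    {x : H} (hx : ‖x‖ = 1) (l m : ℂ) :
    ⟪A (l • x), A (m • x)⟫_ℂ = ⟪A x, A ((conj l * m) • x)⟫_ℂ := by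
  obtain ⟨z, hz, hxz⟩ := exists_norm_eq_one_inner_eq_zero hdim x
  have hzx : ⟪z, x⟫_ℂ = 0 := by rw [← inner_conj_symm, hxz, map_zero]
  calc ⟪A (l • x), A (m • x)⟫_ℂ = ⟪A z, A ((conj l * m) • z)⟫_ℂ := by
        apply hA.inner_map_eq_of_inner_eq <;> simp [hxz, hzx, hx, hz]
        ring
    _ = ⟪A x, A ((conj l * m) • x)⟫_ℂ := by
        apply hA.inner_map_eq_of_inner_eq <;> simp [hxz, hzx, hx, hz]

theorem inner_map_smul_left (hA : PreservesOrthogonality A) (hdim : 2 ≤ Module.rank ℂ H)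
    {x : H} (hx : ‖x‖ = 1) (l : ℂ) (y : H) :
    ⟪A (l • x), A y⟫_ℂ = ⟪A x, A (⟪l • x, y⟫_ℂ • x)⟫_ℂ := by
  have hperp : ⟪l • x, y - ⟪x, y⟫_ℂ • x⟫_ℂ = 0 := by simp [hx]
  have hy : y = ⟪x, y⟫_ℂ • x + (y - ⟪x, y⟫_ℂ • x) := by abel
  rw [hy, map_add, inner_add_right, hA _ _ hperp, add_zero, ← hy,
    hA.inner_map_smul_smul hdim hx, inner_smul_left]

theorem inner_map_smul_right (hA : PreservesOrthogonality A) (hdim : 2 ≤ Module.rank ℂ H)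
    {x : H} (hx : ‖x‖ = 1) (y : H) (l : ℂ) :
    ⟪A y, A (l • x)⟫_ℂ = ⟪A x, A (⟪y, l • x⟫_ℂ • x)⟫_ℂ := by
  have h := hA.inner_map_smul_smul hdim hx ⟪l • x, y⟫_ℂ 1
  rw [one_smul, mul_one, inner_conj_symm] at h
  rw [← inner_conj_symm, hA.inner_map_smul_left hdim hx, inner_conj_symm, h]

theorem inner_map_self_smul_eq_of_inner_ne_zero (hA : PreservesOrthogonality A)
    (hdim : 2 ≤ Module.rank ℂ H) {x y : H} (hx : ‖x‖ = 1) (hy : ‖y‖ = 1) (hxy : ⟪x, y⟫_ℂ ≠ 0)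
    (w : ℂ) : ⟪A x, A (w • x)⟫_ℂ = ⟪A y, A (w • y)⟫_ℂ := by
  have hw : ⟪x, (w / ⟪x, y⟫_ℂ) • y⟫_ℂ = w := by rw [inner_smul_right, div_mul_cancel₀ _ hxy]
  have h := hA.inner_map_smul_left hdim hx 1 ((w / ⟪x, y⟫_ℂ) • y)
  rwa [one_smul, hA.inner_map_smul_right hdim hy, hw, eq_comm] at h

theorem inner_map_self_smul_eq (hA : PreservesOrthogonality A) (hdim : 2 ≤ Module.rank ℂ H)
    {x y : H} (hx : ‖x‖ = 1) (hy : ‖y‖ = 1) (w : ℂ) :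
    ⟪A x, A (w • x)⟫_ℂ = ⟪A y, A (w • y)⟫_ℂ := by
  by_cases hxy : ⟪x, y⟫_ℂ = 0
  · have hne : x + y ≠ 0 := fun h => by
      simp [eq_neg_of_add_eq_zero_right h, hx] at hxy
    have hc : (‖x + y‖⁻¹ : ℂ) ≠ 0 := by simpa using hne
    set u := (‖x + y‖⁻¹ : ℂ) • (x + y)
    have hu : ‖u‖ = 1 := norm_smul_inv_norm hne
    have hxu : ⟪x, u⟫_ℂ ≠ 0 := by simpa [u, inner_add_right, hxy, hx] using hc
    have huy : ⟪u, y⟫_ℂ ≠ 0 := by simpa [u, inner_add_left, hxy, hy] using hc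
    exact (hA.inner_map_self_smul_eq_of_inner_ne_zero hdim hx hu hxu w).trans
      (hA.inner_map_self_smul_eq_of_inner_ne_zero hdim hu hy huy w)
  · exact hA.inner_map_self_smul_eq_of_inner_ne_zero hdim hx hy hxy w

theorem inner_map_eq (hA : PreservesOrthogonality A) (hdim : 2 ≤ Module.rank ℂ H)
    {e : H} (he : ‖e‖ = 1) (u v : H) : ⟪A u, A v⟫_ℂ = ⟪A e, A (⟪u, v⟫_ℂ • e)⟫_ℂ := by
  rcases eq_or_ne u 0 with rfl | hu
  · simp
  have hu₁ : ‖(‖u‖⁻¹ : ℂ) • u‖ = 1 := norm_smul_inv_norm hu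
  have hu' : u = (‖u‖ : ℂ) • ((‖u‖⁻¹ : ℂ) • u) := by simp [smul_smul, hu]
  rw [hu', hA.inner_map_smul_left hdim hu₁, hA.inner_map_self_smul_eq hdim hu₁ he, ← hu']

theorem norm_map_le (hA : PreservesOrthogonality A) (hdim : 2 ≤ Module.rank ℂ H) {e u : H}
    (he : ‖e‖ = 1) (hu : ‖u‖ ≤ 1) : ‖A u‖ ≤ ‖A e‖ := by
  set v : H := (√(1 - ‖u‖ ^ 2) : ℂ) • e
  have hv : ‖v‖ ^ 2 = 1 - ‖u‖ ^ 2 := by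
    rw [norm_smul, Complex.norm_real, he, mul_one, Real.norm_eq_abs, sq_abs,
      Real.sq_sqrt (by nlinarith [norm_nonneg u])]
  have hsum : ⟪u, u⟫_ℂ + ⟪v, v⟫_ℂ = 1 := by
    have h : ‖u‖ ^ 2 + ‖v‖ ^ 2 = 1 := by linarith
    simp only [inner_self_eq_norm_sq_to_K]
    norm_cast
    simp [h]
  have hAsum : ⟪A u, A u⟫_ℂ + ⟪A v, A v⟫_ℂ = ⟪A e, A e⟫_ℂ := by
    rw [hA.inner_map_eq hdim he u u, hA.inner_map_eq hdim he v v, ← inner_add_right, ← map_add,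
      ← add_smul, hsum, one_smul]
  simp only [inner_self_eq_norm_sq_to_K] at hAsum
  have hnorm : ‖A u‖ ^ 2 + ‖A v‖ ^ 2 = ‖A e‖ ^ 2 := by exact_mod_cast hAsum
  exact (pow_le_pow_iff_left₀ (norm_nonneg _) (norm_nonneg _) two_ne_zero).mp
    (by nlinarith [sq_nonneg ‖A v‖])

theorem continuous (hA : PreservesOrthogonality A) (hdim : 2 ≤ Module.rank ℂ H) :
    Continuous A := by
  obtain ⟨e, he, -⟩ := exists_norm_eq_one_inner_eq_zero hdim 0
  refine A.continuous_of_isBounded_nhds_zero (Metric.ball_mem_nhds 0 one_pos) ?_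
  refine isBounded_iff_forall_norm_le.mpr ⟨‖A e‖, ?_⟩
  rintro _ ⟨u, hu, rfl⟩
  exact hA.norm_map_le hdim he (mem_ball_zero_iff.mp hu).le

theorem exists_linearMap (hA : PreservesOrthogonality A) (hdim : 2 ≤ Module.rank ℂ H) :
    ∃ G : ℂ →ₗ[ℝ] ℂ, ∀ u v, ⟪A u, A v⟫_ℂ = G ⟪u, v⟫_ℂ := by
  obtain ⟨e, he, -⟩ := exists_norm_eq_one_inner_eq_zero hdim 0
  refine ⟨{ toFun := fun w => ⟪A e, A (w • e)⟫_ℂ, map_add' := ?_, map_smul' := ?_ },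
    hA.inner_map_eq hdim he⟩
  · intro w₁ w₂
    simp only [add_smul, map_add, inner_add_right]
  · intro t w
    simp only [RingHom.id_apply]
    rw [smul_assoc, map_real_smul A (hA.continuous hdim), RCLike.real_smul_eq_coe_smul (K := ℂ),
      inner_smul_right]
    rfl

end PreservesOrthogonality

theorem denseRange_of_inner_map_eq {A : H → K} (hA : A ≠ 0) (hdense : DenseRange A)
    {G : ℂ → ℂ} (hG : ∀ u v, ⟪A u, A v⟫_ℂ = G ⟪u, v⟫_ℂ) : DenseRange G := by
  obtain ⟨x, hx⟩ : ∃ x, A x ≠ 0 := by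
    by_contra! h
    exact hA (funext h)
  have hsurj : Function.Surjective fun k : K => ⟪A x, k⟫_ℂ := fun c =>
    ⟨(c / ⟪A x, A x⟫_ℂ) • A x, by
      dsimp only
      rw [inner_smul_right, div_mul_cancel₀ _ (inner_self_ne_zero.mpr hx)]⟩
  refine (hsurj.denseRange.comp hdense (continuous_const.inner continuous_id)).mono ?_
  rintro _ ⟨v, rfl⟩
  exact ⟨_, (hG x v).symm⟩

end

theorem stmt_8 {H K : Type*} [NormedAddCommGroup H] [InnerProductSpace ℂ H]
    [NormedAddCommGroup K] [InnerProductSpace ℂ K]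
    (hdim : 2 ≤ Module.rank ℂ H)
    (A : H → K) (hA : A ≠ 0)
    (hadd : ∀ x y, A (x + y) = A x + A y)
    (hdense : DenseRange A)
    (horth : ∀ x y : H, (inner ℂ x y : ℂ) = 0 → (inner ℂ (A x) (A y) : ℂ) = 0) :
    ∀ x y : H, (inner ℂ x y : ℂ) = 0 ↔ (inner ℂ (A x) (A y) : ℂ) = 0 := by
  obtain ⟨G, hG⟩ : ∃ G : ℂ →ₗ[ℝ] ℂ, ∀ u v, ⟪A u, A v⟫_ℂ = G ⟪u, v⟫_ℂ :=
    PreservesOrthogonality.exists_linearMap (A := AddMonoidHom.mk' A hadd) horth hdim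
  have hinj := G.injective_of_denseRange (denseRange_of_inner_map_eq hA hdense hG)
  intro x y
  exact ⟨horth x y, fun h => hinj (by rw [← hG, h, map_zero])⟩
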